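/- arXiv:1905.11291 — 4 statements merged into one kernel-verified Lean document; each statement's English description precedes it below -/
import Mathlib

section
/- Let κ > 0 and ε > 0 satisfy 16κε < 3, set B := √(1 − 16κε/3), and define R : ℝ → ℝ by R(x) = 2√κ · (1 + B·cosh(2√κ·x))^{−1/2}. Then R is twice differentiable and satisfies the solitary-wave profile equation R''(x) = κ·R(x) − R(x)³ + ε·R(x)⁵ for all x ∈ ℝ. (This is the explicit solitary-wave profile of the one-dimensional cubic-quintic NLS; the constant 16/3, obtained from the first integral (R')² = κR² − R⁴/2 + εR⁶/3, corrects the constant printed in the paper's footnote.) -/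
/-- The explicit solitary-wave profile
`R(x) = 2√κ (1 + B cosh(2√κ x))^{-1/2}`, with `B = √(1 − 16κε/3)`,
satisfies the cubic-quintic profile equation `R'' = κR − R³ + εR⁵`. -/
theorem cubic_quintic_explicit_profile (κ ε : ℝ) (hκ : 0 < κ) (hε : 0 < ε)
    (h : 16 * κ * ε < 3) (B : ℝ) (hB : B = Real.sqrt (1 - 16 * κ * ε / 3))
    (R : ℝ → ℝ)
    (hRdef : ∀ x : ℝ,
      R x = 2 * Real.sqrt κ * (1 + B * Real.cosh (2 * Real.sqrt κ * x)) ^ (-(1 / 2) : ℝ)) :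
    (∀ x : ℝ, DifferentiableAt ℝ R x) ∧ (∀ x : ℝ, DifferentiableAt ℝ (deriv R) x) ∧
      (∀ x : ℝ, deriv (deriv R) x = κ * R x - (R x) ^ 3 + ε * (R x) ^ 5) := by
  have h3 : (0:ℝ) < 1 - 16 * κ * ε / 3 := by linarith
  have hBpos : 0 < B := by rw [hB]; exact Real.sqrt_pos.mpr h3
  have hB2 : B ^ 2 = 1 - 16 * κ * ε / 3 := by
    rw [hB, sq, Real.mul_self_sqrt h3.le]
  set s : ℝ := 2 * Real.sqrt κ with hsdef
  have hs2 : s ^ 2 = 4 * κ := by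
    rw [hsdef, mul_pow, Real.sq_sqrt hκ.le]; ring
  have hupos : ∀ x : ℝ, 0 < 1 + B * Real.cosh (s * x) := by
    intro x
    nlinarith [Real.one_le_cosh (s * x), hBpos]
  -- derivative of the inner function
  have hlin : ∀ x : ℝ, HasDerivAt (fun y : ℝ => s * y) s x := by
    intro x; simpa using (hasDerivAt_id x).const_mul s
  have hu' : ∀ x : ℝ, HasDerivAt (fun y => 1 + B * Real.cosh (s * y))
      (B * (Real.sinh (s * x) * s)) x := by
    intro x
    exact (((Real.hasDerivAt_cosh (s * x)).comp x (hlin x)).const_mul B).const_add 1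
  -- first derivative of R
  have hR' : ∀ x : ℝ, HasDerivAt R
      (s * ((-(1/2) : ℝ) * (1 + B * Real.cosh (s * x)) ^ ((-(1/2) : ℝ) - 1) *
        (B * (Real.sinh (s * x) * s)))) x := by
    intro x
    have h2 := (Real.hasDerivAt_rpow_const (x := 1 + B * Real.cosh (s * x))
      (p := (-(1/2) : ℝ)) (Or.inl (hupos x).ne')).comp x (hu' x)
    have hfun : R = fun y => s * (1 + B * Real.cosh (s * y)) ^ (-(1/2) : ℝ) :=
      funext fun y => hRdef y
    rw [hfun]
    simpa [Function.comp, mul_assoc] using h2.const_mul s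
  have hderivR : deriv R = fun x => (-(1/2) * B * s^2) *
      ((1 + B * Real.cosh (s * x)) ^ ((-(1/2) : ℝ) - 1) * Real.sinh (s * x)) := by
    funext x
    rw [(hR' x).deriv]; ring
  -- second derivative
  have hR'' : ∀ x : ℝ, HasDerivAt (deriv R)
      ((-(1/2) * B * s^2) *
        ((((-(1/2) : ℝ) - 1) * (1 + B * Real.cosh (s * x)) ^ (((-(1/2) : ℝ) - 1) - 1) *
            (B * (Real.sinh (s * x) * s))) * Real.sinh (s * x) +
          (1 + B * Real.cosh (s * x)) ^ ((-(1/2) : ℝ) - 1) * (Real.cosh (s * x) * s))) x := by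
    intro x
    rw [hderivR]
    have hg := (Real.hasDerivAt_rpow_const (x := 1 + B * Real.cosh (s * x))
      (p := ((-(1/2) : ℝ) - 1)) (Or.inl (hupos x).ne')).comp x (hu' x)
    have hh := (Real.hasDerivAt_sinh (s * x)).comp x (hlin x)
    exact ((hg.mul hh).const_mul (-(1/2) * B * s^2))
  refine ⟨fun x => (hR' x).differentiableAt, fun x => (hR'' x).differentiableAt, fun x => ?_⟩
  rw [(hR'' x).deriv, hRdef x]
  set U : ℝ := 1 + B * Real.cosh (s * x) with hU
  set t : ℝ := U ^ (-(1/2) : ℝ) with ht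
  have hUpos : 0 < U := hupos x
  have ht3 : U ^ ((-(1/2) : ℝ) - 1) = t ^ 3 := by
    rw [ht, show ((-(1/2) : ℝ) - 1) = (-(1/2) : ℝ) * ((3:ℕ):ℝ) by push_cast; norm_num,
      Real.rpow_mul hUpos.le, Real.rpow_natCast]
  have ht5 : U ^ (((-(1/2) : ℝ) - 1) - 1) = t ^ 5 := by
    rw [ht, show (((-(1/2) : ℝ) - 1) - 1) = (-(1/2) : ℝ) * ((5:ℕ):ℝ) by push_cast; norm_num,
      Real.rpow_mul hUpos.le, Real.rpow_natCast]
  have htU : t ^ 2 * U = 1 := by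
    rw [ht, ← Real.rpow_natCast (U ^ (-(1/2) : ℝ)) 2, ← Real.rpow_mul hUpos.le]
    norm_num
    rw [Real.rpow_neg_one]
    exact inv_mul_cancel₀ hUpos.ne'
  rw [ht3, ht5]
  have hS : Real.cosh (s * x) ^ 2 - Real.sinh (s * x) ^ 2 = 1 :=
    Real.cosh_sq_sub_sinh_sq (s * x)
  rw [hU] at htU
  linear_combination ((1/4)*s*t - ε*s^3*t^5) * hs2 - (3/4)*s^3*t^5 * hB2 +
    ((3/4)*s^3*t*(1 - t^2 + B * Real.cosh (s*x) * t^2) - (1/2)*s^3*t) * htU -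
    (3/4)*B^2*s^3*t^5 * hS
end

section
/- Let R : ℝ² → ℝ be twice continuously differentiable and satisfy ΔR(ξ) − R(ξ) + R(ξ)³ = 0 for all ξ ∈ ℝ², and fix t_c > 0. Define, for t < t_c and x ∈ ℝ², ψ(t,x) := (t_c − t)^{−1} · R( x/(t_c − t) ) · exp( i( t/(t_c(t_c − t)) − |x|²/(4(t_c − t)) ) ). Then ψ is a classical solution of the two-dimensional cubic NLS: i∂_t ψ + Δψ + |ψ|²ψ = 0 for all t < t_c and x ∈ ℝ². -/
open scoped BigOperators

/-- Partial derivative in the time variable. -/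
noncomputable def tDeriv (ψ : ℝ → (Fin 2 → ℝ) → ℂ) (t : ℝ) (x : Fin 2 → ℝ) : ℂ :=
  deriv (fun s => ψ s x) t

/-- Spatial Laplacian of a complex-valued function on ℝ², computed coordinatewise. -/
noncomputable def lapC (ψ : ℝ → (Fin 2 → ℝ) → ℂ) (t : ℝ) (x : Fin 2 → ℝ) : ℂ :=
  ∑ j : Fin 2, iteratedDeriv 2 (fun s => ψ t (Function.update x j s)) (x j)

/-- Laplacian of a real-valued function on ℝ², computed coordinatewise. -/
noncomputable def lapR (R : (Fin 2 → ℝ) → ℝ) (ξ : Fin 2 → ℝ) : ℝ :=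
  ∑ j : Fin 2, iteratedDeriv 2 (fun s => R (Function.update ξ j s)) (ξ j)

/-- The explicit blowup solution
`ψ(t,x) = (t_c−t)⁻¹ R(x/(t_c−t)) exp(i(t/(t_c(t_c−t)) − |x|²/(4(t_c−t))))`. -/
noncomputable def blowupSol (tc : ℝ) (R : (Fin 2 → ℝ) → ℝ) (t : ℝ) (x : Fin 2 → ℝ) : ℂ :=
  (((tc - t)⁻¹ * R ((tc - t)⁻¹ • x) : ℝ) : ℂ) *
    Complex.exp (Complex.I *
      ((t / (tc * (tc - t)) - (∑ j : Fin 2, (x j) ^ 2) / (4 * (tc - t)) : ℝ) : ℂ))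

/-!
Write `ψ = a · exp (i θ)` with the real amplitude `a(t, x) = ℓ⁻¹ R(x / ℓ)`, `ℓ = t_c − t`, and the
real phase `θ`. Along any real line, `(f e^{iφ})'' = (f'' − f φ'² + i (2 f' φ' + f φ'')) e^{iφ}`.
Substituting, the real part of `i ∂ₜψ + Δψ + |ψ|²ψ` is `ℓ⁻³ (ΔR − R + R³)(x / ℓ) e^{iθ}`, while the
imaginary part cancels identically: the radial derivative `ℓ⁻³ x · ∇R` coming from `∂ₜ a` is
cancelled by the cross terms `2 ∂ⱼa ∂ⱼθ`, and `ℓ⁻² R` by `a Δθ`.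
-/

open Complex Function

section Modulated

variable {f φ : ℝ → ℝ} {s : ℝ}

theorem HasDerivAt.ofReal_mul_cexp_I_mul {f₁ φ₁ : ℝ} (hf : HasDerivAt f f₁ s)
    (hφ : HasDerivAt φ φ₁ s) :
    HasDerivAt (fun r => (f r : ℂ) * cexp (I * φ r))
      ((f₁ + I * (f s * φ₁ : ℝ)) * cexp (I * φ s)) s :=
  (hf.ofReal_comp.mul (hφ.ofReal_comp.const_mul I).cexp).congr_deriv (by push_cast; ring)

theorem iteratedDeriv_two_ofReal_mul_cexp_I_mul {f' φ' : ℝ → ℝ} {f₂ φ₂ : ℝ}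
    (hf : ∀ r, HasDerivAt f (f' r) r) (hφ : ∀ r, HasDerivAt φ (φ' r) r)
    (hf' : HasDerivAt f' f₂ s) (hφ' : HasDerivAt φ' φ₂ s) :
    iteratedDeriv 2 (fun r => (f r : ℂ) * cexp (I * φ r)) s =
      ((f₂ - f s * φ' s ^ 2 : ℝ) + I * (2 * f' s * φ' s + f s * φ₂ : ℝ)) * cexp (I * φ s) := by
  have hderiv : deriv (fun r => (f r : ℂ) * cexp (I * φ r)) =
      fun r => ((f' r : ℂ) + I * (f r * φ' r : ℝ)) * cexp (I * φ r) :=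
    funext fun r => ((hf r).ofReal_mul_cexp_I_mul (hφ r)).deriv
  have hcoef : HasDerivAt (fun r => (f' r : ℂ) + I * (f r * φ' r : ℝ))
      (f₂ + I * (f' s * φ' s + f s * φ₂ : ℝ)) s :=
    hf'.ofReal_comp.add (((hf s).mul hφ').ofReal_comp.const_mul I)
  rw [iteratedDeriv_succ, iteratedDeriv_one, hderiv]
  refine (hcoef.mul ((hφ s).ofReal_comp.const_mul I).cexp).deriv.trans ?_
  push_cast
  linear_combination (f s * φ' s ^ 2 : ℂ) * cexp (I * φ s) * I_sq

end Modulated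

section PartialDeriv

variable {ι F : Type*} [Fintype ι] [DecidableEq ι] [NormedAddCommGroup F] [NormedSpace ℝ F]

noncomputable def partialDeriv (j : ι) (f : (ι → ℝ) → F) (y : ι → ℝ) : F :=
  fderiv ℝ f y (Pi.single j 1)

theorem fderiv_apply_eq_sum_partialDeriv (f : (ι → ℝ) → F) (y v : ι → ℝ) :
    fderiv ℝ f y v = ∑ j, v j • partialDeriv j f y := by
  conv_lhs => rw [pi_eq_sum_univ' v]
  simp only [map_sum, map_smul, partialDeriv]

theorem ContDiff.partialDeriv {n : WithTop ℕ∞} {f : (ι → ℝ) → F} (hf : ContDiff ℝ (n + 1) f)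
    (j : ι) : ContDiff ℝ n (partialDeriv j f) :=
  (hf.fderiv_right le_rfl).clm_apply contDiff_const

theorem hasDerivAt_apply_smul_update {f : (ι → ℝ) → F} (c : ℝ) (x : ι → ℝ) (j : ι) {r : ℝ}
    (hf : DifferentiableAt ℝ f (c • update x j r)) :
    HasDerivAt (fun s => f (c • update x j s)) (c • partialDeriv j f (c • update x j r)) r :=
  (hf.hasFDerivAt.comp_hasDerivAt r ((hasDerivAt_update x j r).const_smul c)).congr_deriv
    (map_smul _ _ _)

theorem iteratedDeriv_two_apply_update {f : (ι → ℝ) → F} (hf : ContDiff ℝ 2 f) (ξ : ι → ℝ)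
    (j : ι) :
    iteratedDeriv 2 (fun s => f (update ξ j s)) (ξ j) = partialDeriv j (partialDeriv j f) ξ := by
  have hslice (g : (ι → ℝ) → F) (hg : Differentiable ℝ g) (r : ℝ) :
      HasDerivAt (fun s => g (update ξ j s)) (partialDeriv j g (update ξ j r)) r := by
    simpa only [one_smul] using hasDerivAt_apply_smul_update 1 ξ j (hg _)
  rw [iteratedDeriv_succ, iteratedDeriv_one,
    funext fun r => (hslice f (hf.differentiable two_ne_zero) r).deriv,
    (hslice _ ((hf.partialDeriv (n := 1) j).differentiable one_ne_zero) (ξ j)).deriv,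
    update_eq_self]

theorem sum_sq_update (x : ι → ℝ) (j : ι) (s : ℝ) :
    ∑ k, update x j s k ^ 2 = s ^ 2 + (∑ k, x k ^ 2 - x j ^ 2) := by
  rw [Finset.sum_congr rfl fun k _ => apply_update (fun _ a => a ^ 2) x j s k,
    Finset.sum_update_of_mem (Finset.mem_univ j), Finset.sum_sdiff_eq_sub (Finset.subset_univ _),
    Finset.sum_singleton]

end PartialDeriv

section Blowup

variable {tc t : ℝ} {R : (Fin 2 → ℝ) → ℝ}

theorem lapR_eq_sum_partialDeriv (hR : ContDiff ℝ 2 R) (ξ : Fin 2 → ℝ) :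
    lapR R ξ = ∑ j, partialDeriv j (partialDeriv j R) ξ :=
  Finset.sum_congr rfl fun j _ => iteratedDeriv_two_apply_update hR ξ j

noncomputable def blowupAmp (tc : ℝ) (R : (Fin 2 → ℝ) → ℝ) (t : ℝ) (x : Fin 2 → ℝ) : ℝ :=
  (tc - t)⁻¹ * R ((tc - t)⁻¹ • x)

noncomputable def blowupPhase (tc t : ℝ) (x : Fin 2 → ℝ) : ℝ :=
  t / (tc * (tc - t)) - (∑ j : Fin 2, x j ^ 2) / (4 * (tc - t))

theorem blowupSol_eq (x : Fin 2 → ℝ) :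
    blowupSol tc R t x = blowupAmp tc R t x * cexp (I * blowupPhase tc t x) :=
  rfl

theorem norm_blowupSol (x : Fin 2 → ℝ) : ‖blowupSol tc R t x‖ = |blowupAmp tc R t x| := by
  rw [blowupSol_eq, norm_mul, mul_comm I, norm_exp_ofReal_mul_I, norm_real, Real.norm_eq_abs,
    mul_one]

theorem hasDerivAt_blowupAmp_time (hR : Differentiable ℝ R) (ht : t ≠ tc) (x : Fin 2 → ℝ) :
    HasDerivAt (fun s => blowupAmp tc R s x)
      ((tc - t)⁻¹ ^ 2 * R ((tc - t)⁻¹ • x)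
        + (tc - t)⁻¹ ^ 3 * fderiv ℝ R ((tc - t)⁻¹ • x) x) t := by
  have hinv : HasDerivAt (fun s => (tc - s)⁻¹) ((tc - t)⁻¹ ^ 2) t := by
    refine (((hasDerivAt_id t).const_sub tc).inv (sub_ne_zero_of_ne ht.symm)).congr_deriv ?_
    simp [inv_pow]
  refine (hinv.mul ((hR _).hasFDerivAt.comp_hasDerivAt t (hinv.smul_const x))).congr_deriv ?_
  rw [map_smul, smul_eq_mul, Function.comp_apply]
  ring

theorem hasDerivAt_blowupPhase_time (htc : tc ≠ 0) (ht : t ≠ tc) (x : Fin 2 → ℝ) :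
    HasDerivAt (fun s => blowupPhase tc s x) ((tc - t)⁻¹ ^ 2 * (1 - (∑ j, x j ^ 2) / 4)) t := by
  have hl : tc - t ≠ 0 := sub_ne_zero_of_ne ht.symm
  have hlin : HasDerivAt (fun s => tc - s) (-1) t := by
    simpa using (hasDerivAt_id t).const_sub tc
  refine (((hasDerivAt_id t).div (hlin.const_mul tc) (mul_ne_zero htc hl)).sub
    ((hasDerivAt_const t _).div (hlin.const_mul 4) (mul_ne_zero four_ne_zero hl))).congr_deriv ?_
  rw [id_eq]
  field_simp
  ring

theorem tDeriv_blowupSol (hR : Differentiable ℝ R) (htc : tc ≠ 0) (ht : t ≠ tc)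
    (x : Fin 2 → ℝ) :
    tDeriv (blowupSol tc R) t x =
      (((tc - t)⁻¹ ^ 2 * R ((tc - t)⁻¹ • x) + (tc - t)⁻¹ ^ 3 * fderiv ℝ R ((tc - t)⁻¹ • x) x : ℝ)
        + I * (blowupAmp tc R t x * ((tc - t)⁻¹ ^ 2 * (1 - (∑ j, x j ^ 2) / 4)) : ℝ))
        * cexp (I * blowupPhase tc t x) :=
  ((hasDerivAt_blowupAmp_time hR ht x).ofReal_mul_cexp_I_mul
    (hasDerivAt_blowupPhase_time htc ht x)).deriv

theorem hasDerivAt_blowupPhase_update (tc t : ℝ) (x : Fin 2 → ℝ) (j : Fin 2) (r : ℝ) :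
    HasDerivAt (fun s => blowupPhase tc t (update x j s)) (-(r * (tc - t)⁻¹ / 2)) r := by
  simp only [blowupPhase, sum_sq_update]
  refine ((((hasDerivAt_pow 2 r).add_const _).div_const (4 * (tc - t))).const_sub
    (t / (tc * (tc - t)))).congr_deriv ?_
  generalize tc - t = l
  ring

theorem iteratedDeriv_two_blowupSol_update (hR : ContDiff ℝ 2 R) (x : Fin 2 → ℝ) (j : Fin 2) :
    iteratedDeriv 2 (fun s => blowupSol tc R t (update x j s)) (x j) =
      (((tc - t)⁻¹ ^ 3 * partialDeriv j (partialDeriv j R) ((tc - t)⁻¹ • x)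
          - blowupAmp tc R t x * (x j * (tc - t)⁻¹ / 2) ^ 2 : ℝ)
        + I * (-((tc - t)⁻¹ ^ 3 * x j * partialDeriv j R ((tc - t)⁻¹ • x))
          - blowupAmp tc R t x * (tc - t)⁻¹ / 2 : ℝ))
        * cexp (I * blowupPhase tc t x) := by
  set c := (tc - t)⁻¹ with hc
  have hamp (r : ℝ) : HasDerivAt (fun s => blowupAmp tc R t (update x j s))
      (c * (c * partialDeriv j R (c • update x j r))) r :=
    (hasDerivAt_apply_smul_update c x j (hR.differentiable two_ne_zero _)).const_mul c
  have hamp' : HasDerivAt (fun r => c * (c * partialDeriv j R (c • update x j r)))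
      (c * (c * (c * partialDeriv j (partialDeriv j R) (c • x)))) (x j) := by
    have h := hasDerivAt_apply_smul_update c x j (r := x j)
      ((hR.partialDeriv (n := 1) j).differentiable one_ne_zero _)
    rw [update_eq_self] at h
    exact (h.const_mul c).const_mul c
  have hphase' : HasDerivAt (fun r => -(r * c / 2)) (-(c / 2)) (x j) := by
    simpa using (((hasDerivAt_id (x j)).mul_const c).div_const 2).fun_neg
  refine (iteratedDeriv_two_ofReal_mul_cexp_I_mul hamp (hasDerivAt_blowupPhase_update tc t x j)
    hamp' hphase').trans ?_
  simp only [update_eq_self, ← hc]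
  push_cast
  ring

end Blowup

/-- If `R` is a twice continuously differentiable solution of `ΔR − R + R³ = 0` on ℝ²
and `t_c > 0`, then the explicit blowup solution is a classical solution of the
two-dimensional cubic NLS `i ∂_t ψ + Δψ + |ψ|²ψ = 0` for all `t < t_c`. -/
theorem blowup_solution_solves_cubic_nls (R : (Fin 2 → ℝ) → ℝ)
    (hR : ContDiff ℝ 2 R)
    (hReq : ∀ ξ : Fin 2 → ℝ, lapR R ξ - R ξ + (R ξ) ^ 3 = 0)
    (tc : ℝ) (htc : 0 < tc) :
    ∀ t < tc, ∀ x : Fin 2 → ℝ,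
      Complex.I * tDeriv (blowupSol tc R) t x + lapC (blowupSol tc R) t x
        + (‖blowupSol tc R t x‖ : ℂ) ^ 2 * blowupSol tc R t x = 0 := by
  intro t ht x
  have hprofile := hReq ((tc - t)⁻¹ • x)
  rw [lapR_eq_sum_partialDeriv hR, Fin.sum_univ_two] at hprofile
  rw [lapC, Fin.sum_univ_two, tDeriv_blowupSol (hR.differentiable two_ne_zero) htc.ne' ht.ne,
    iteratedDeriv_two_blowupSol_update hR, iteratedDeriv_two_blowupSol_update hR, norm_blowupSol,
    ← ofReal_pow, sq_abs, blowupSol_eq, fderiv_apply_eq_sum_partialDeriv]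
  apply_fun ((↑) : ℝ → ℂ) at hprofile
  simp only [blowupAmp, Fin.sum_univ_two, smul_eq_mul] at hprofile ⊢
  push_cast at hprofile ⊢
  linear_combination (cexp (I * blowupPhase tc t x) * ((tc : ℂ) - t)⁻¹ ^ 3) * hprofile
    + (((tc : ℂ) - t)⁻¹ ^ 3 * R ((tc - t)⁻¹ • x) * (1 - (x 0 ^ 2 + x 1 ^ 2) / 4)
      * cexp (I * blowupPhase tc t x)) * I_sq
end

section
/- Let R : ℝ² → ℝ be square-integrable, fix t_c > 0, and define for t < t_c the explicit blowup solution ψ(t,x) := (t_c − t)^{−1} · R( x/(t_c − t) ) · exp( i( t/(t_c(t_c − t)) − |x|²/(4(t_c − t)) ) ). Then for every bounded continuous function f : ℝ² → ℝ, lim_{t → t_c⁻} ∫_{ℝ²} |ψ(t,x)|² f(x) dx = ‖R‖_{L²(ℝ²)}² · f(0). In particular (taking f ≡ 1), the L² norm ‖ψ(t,·)‖_{L²} = ‖R‖_{L²} is constant in t, and |ψ(t,·)|² converges in the weak-* sense to the point mass ‖R‖_{L²}² δ₀ as t → t_c⁻. -/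
open scoped BigOperators
open MeasureTheory

/-!
The phase of `ψ` has modulus one, so `|ψ(t,·)|²` is the `L¹`-normalised dilation
`λ⁻² R(·/λ)²` of `R²` with `λ = t_c − t`. Substituting `x = λ ξ` turns `∫ |ψ|² f` into
`∫ R(ξ)² f(λ ξ) dξ`: for `f ≡ 1` this is the conserved mass, and as `λ → 0⁺` dominated
convergence (with dominating function `K R²`) gives the limit `f(0) ∫ R²`.
-/

open Filter Topology Module

section Dilation

variable {E : Type*} [NormedAddCommGroup E] [NormedSpace ℝ E] [MeasurableSpace E]

theorem integral_dilation_mul [FiniteDimensional ℝ E] [BorelSpace E] (μ : Measure E)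
    [μ.IsAddHaarMeasure] (g f : E → ℝ) {c : ℝ} (hc : 0 < c) :
    ∫ x, (c⁻¹) ^ finrank ℝ E * g (c⁻¹ • x) * f x ∂μ = ∫ ξ, g ξ * f (c • ξ) ∂μ := by
  have hdil : ∀ x : E, (c⁻¹) ^ finrank ℝ E * g (c⁻¹ • x) * f x
      = (c⁻¹) ^ finrank ℝ E * (g (c⁻¹ • x) * f (c • c⁻¹ • x)) := by
    intro x
    rw [smul_inv_smul₀ hc.ne', mul_assoc]
  simp_rw [hdil]
  rw [integral_const_mul,
    Measure.integral_comp_inv_smul_of_nonneg μ (fun ξ => g ξ * f (c • ξ)) hc.le, smul_eq_mul,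
    ← mul_assoc, inv_pow, inv_mul_cancel₀ (pow_ne_zero _ hc.ne'), one_mul]

theorem tendsto_integral_mul_comp_smul [OpensMeasurableSpace E] {μ : Measure E}
    {α : Type*} {l : Filter α} [l.IsCountablyGenerated] {s : α → ℝ} (hs : Tendsto s l (𝓝 0))
    {g : E → ℝ} (hg : Integrable g μ) {f : E → ℝ} (hf : Continuous f) {K : ℝ}
    (hK : ∀ x, |f x| ≤ K) :
    Tendsto (fun a => ∫ ξ, g ξ * f (s a • ξ) ∂μ) l (𝓝 ((∫ ξ, g ξ ∂μ) * f 0)) := by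
  rw [← integral_mul_const]
  refine tendsto_integral_filter_of_dominated_convergence (fun ξ => ‖g ξ‖ * K)
    (Eventually.of_forall fun a =>
      hg.aestronglyMeasurable.mul (hf.comp (continuous_const_smul _)).aestronglyMeasurable)
    (Eventually.of_forall fun a => Eventually.of_forall fun ξ => ?_)
    (hg.norm.mul_const K)
    (Eventually.of_forall fun ξ => ?_)
  · rw [norm_mul]
    exact mul_le_mul_of_nonneg_left (hK _) (norm_nonneg _)
  · have hsξ : Tendsto (fun a => s a • ξ) l (𝓝 0) := by
      simpa using hs.smul_const ξ
    exact tendsto_const_nhds.mul ((hf.tendsto 0).comp hsξ)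

end Dilation

theorem norm_blowupSol_sq (tc : ℝ) (R : (Fin 2 → ℝ) → ℝ) (t : ℝ) (x : Fin 2 → ℝ) :
    ‖blowupSol tc R t x‖ ^ 2 = ((tc - t)⁻¹) ^ 2 * R ((tc - t)⁻¹ • x) ^ 2 := by
  rw [blowupSol, norm_mul, mul_comm Complex.I, Complex.norm_exp_ofReal_mul_I, mul_one,
    Complex.norm_real, Real.norm_eq_abs, sq_abs, mul_pow]

theorem integral_norm_blowupSol_sq_mul (R f : (Fin 2 → ℝ) → ℝ) {tc t : ℝ} (ht : t < tc) :
    ∫ x, ‖blowupSol tc R t x‖ ^ 2 * f x = ∫ ξ, R ξ ^ 2 * f ((tc - t) • ξ) := by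
  have hdim : finrank ℝ (Fin 2 → ℝ) = 2 := by simp
  simp_rw [norm_blowupSol_sq]
  simpa only [hdim] using integral_dilation_mul volume (fun ξ => R ξ ^ 2) f (sub_pos.mpr ht)

theorem blowup_solution_concentrates_general (R : (Fin 2 → ℝ) → ℝ)
    (hR : Integrable (fun ξ : Fin 2 → ℝ => (R ξ) ^ 2))
    (tc : ℝ) :
    (∀ t < tc, (∫ x : Fin 2 → ℝ, ‖blowupSol tc R t x‖ ^ 2) = ∫ ξ : Fin 2 → ℝ, (R ξ) ^ 2) ∧
    (∀ f : (Fin 2 → ℝ) → ℝ, Continuous f → (∃ K : ℝ, ∀ x, |f x| ≤ K) →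
      Filter.Tendsto (fun t => ∫ x : Fin 2 → ℝ, ‖blowupSol tc R t x‖ ^ 2 * f x)
        (nhdsWithin tc (Set.Iio tc))
        (nhds ((∫ ξ : Fin 2 → ℝ, (R ξ) ^ 2) * f 0))) := by
  refine ⟨fun t ht => by simpa using integral_norm_blowupSol_sq_mul R (fun _ => 1) ht, ?_⟩
  rintro f hf ⟨K, hK⟩
  have hscale : Tendsto (fun t => tc - t) (𝓝[<] tc) (𝓝 0) := by
    simpa using (((tendsto_const_nhds (x := tc)).sub (tendsto_id (x := 𝓝 tc))).mono_left
      (nhdsWithin_le_nhds (s := Set.Iio tc)))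
  refine (tendsto_integral_mul_comp_smul hscale hR hf hK).congr' ?_
  filter_upwards [self_mem_nhdsWithin] with t ht
  exact (integral_norm_blowupSol_sq_mul R f ht).symm

/-- For square-integrable `R` and `t_c > 0`, the mass `∫|ψ(t,·)|²` of the explicit
blowup solution is constant, equal to `‖R‖_{L²}²`, and `|ψ(t,·)|²` converges in the
weak-* sense to the point mass `‖R‖_{L²}² δ₀` as `t → t_c⁻`: for every bounded
continuous `f`, `∫ |ψ(t,x)|² f(x) dx → ‖R‖_{L²}² f(0)`. -/
theorem blowup_solution_concentrates (R : (Fin 2 → ℝ) → ℝ)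
    (hR : Integrable (fun ξ : Fin 2 → ℝ => (R ξ) ^ 2))
    (tc : ℝ) (htc : 0 < tc) :
    (∀ t < tc, (∫ x : Fin 2 → ℝ, ‖blowupSol tc R t x‖ ^ 2) = ∫ ξ : Fin 2 → ℝ, (R ξ) ^ 2) ∧
    (∀ f : (Fin 2 → ℝ) → ℝ, Continuous f → (∃ K : ℝ, ∀ x, |f x| ≤ K) →
      Filter.Tendsto (fun t => ∫ x : Fin 2 → ℝ, ‖blowupSol tc R t x‖ ^ 2 * f x)
        (nhdsWithin tc (Set.Iio tc))
        (nhds ((∫ ξ : Fin 2 → ℝ, (R ξ) ^ 2) * f 0))) :=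
  blowup_solution_concentrates_general R hR tc
end

section
/- Let R : ℝ² → ℝ be infinitely differentiable, satisfy ΔR − R + R³ = 0 on ℝ², satisfy |R(ξ)| ≤ C·e^{−δ|ξ|} for some C, δ > 0, be square-integrable, and attain a strict maximum modulus at the origin (|R(ξ)| < R(0) for ξ ≠ 0, R(0) > 0). Then for every x* ∈ ℝ² there exists a function ψ : [0,1) × ℝ² → ℂ such that: (i) ψ is a classical solution of the two-dimensional cubic NLS i∂_t ψ + Δψ + |ψ|²ψ = 0 on (0,1) × ℝ²; (ii) the initial datum ψ(0,·) is infinitely differentiable and satisfies |ψ(0,x)| = |R(x − x*)| for all x, so that |ψ(0,·)| attains its strict maximum at x*, and the initial data for different x* are distinct; (iii) for every x ∈ ℝ² with x ≠ 0, lim_{t → 1⁻} ψ(t,x) = 0; (iv) for every bounded continuous f : ℝ² → ℝ, lim_{t → 1⁻} ∫_{ℝ²} |ψ(t,x)|² f(x) dx = ‖R‖_{L²}² f(0). (Hence a whole family of distinct smooth initial data, indexed by x* ∈ ℝ², collapse at t = 1 at the same point x = 0 with identically zero radiation field, so the input cannot be recovered from the limit: reversibility is lost at collapse.) -/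
open scoped BigOperators
open MeasureTheory

noncomputable def yv (xs : Fin 2 → ℝ) (t : ℝ) (x : Fin 2 → ℝ) : Fin 2 → ℝ :=
  (1 - t)⁻¹ • x - xs
noncomputable def thF (xs : Fin 2 → ℝ) (t : ℝ) (x : Fin 2 → ℝ) : ℝ :=
  t / (1 - t) - (1 - t) * (∑ j, (yv xs t x j) ^ 2) / 4
    - (∑ j, xs j * (x j - xs j)) / 2 - (∑ j, (xs j) ^ 2) * t / 4
noncomputable def pd (g : (Fin 2 → ℝ) → ℝ) (j : Fin 2) (ξ : Fin 2 → ℝ) : ℝ :=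
  fderiv ℝ g ξ (Pi.single j 1)

lemma hasDerivAt_update' (x : Fin 2 → ℝ) (j : Fin 2) (s : ℝ) :
    HasDerivAt (fun s => Function.update x j s) (Pi.single j 1) s := by
  rw [hasDerivAt_pi]
  intro k
  by_cases h : k = j
  · subst h; simpa [Function.update_apply] using hasDerivAt_id' s
  · simpa [Function.update_apply, h, Pi.single_apply] using hasDerivAt_const s (x k)

lemma hasDerivAt_comp_update {g : (Fin 2 → ℝ) → ℝ} (hg : ContDiff ℝ (⊤ : ℕ∞) g)
    (x : Fin 2 → ℝ) (j : Fin 2) (s : ℝ) :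
    HasDerivAt (fun s => g (Function.update x j s)) (pd g j (Function.update x j s)) s := by
  have h1 := (hg.differentiable (by simp) (Function.update x j s)).hasFDerivAt
  exact h1.comp_hasDerivAt s (hasDerivAt_update' x j s)


lemma iteratedDeriv_two {F : Type*} [NormedAddCommGroup F] [NormedSpace ℝ F] (f : ℝ → F) :
    iteratedDeriv 2 f = deriv (deriv f) := by
  rw [show (2:ℕ) = 1 + 1 from rfl, iteratedDeriv_succ, iteratedDeriv_one]

lemma contDiff_pd {g : (Fin 2 → ℝ) → ℝ} (hg : ContDiff ℝ (⊤ : ℕ∞) g) (j : Fin 2) :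
    ContDiff ℝ (⊤ : ℕ∞) (pd g j) :=
  (hg.fderiv_right (by simp)).clm_apply contDiff_const

lemma clm_decomp (L : (Fin 2 → ℝ) →L[ℝ] ℝ) (v : Fin 2 → ℝ) :
    L v = v 0 * L (Pi.single 0 1) + v 1 * L (Pi.single 1 1) := by
  have hv : v = v 0 • (Pi.single 0 1 : Fin 2 → ℝ) + v 1 • (Pi.single 1 1 : Fin 2 → ℝ) := by
    funext k
    fin_cases k <;> simp [Pi.single_apply]
  rw [hv, map_add, _root_.map_smul, _root_.map_smul]
  simp [smul_eq_mul]

lemma yv_update (xs : Fin 2 → ℝ) (t : ℝ) (x : Fin 2 → ℝ) (j : Fin 2) (s : ℝ) :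
    yv xs t (Function.update x j s)
      = Function.update (yv xs t x) j ((1 - t)⁻¹ * s - xs j) := by
  funext k
  by_cases h : k = j
  · subst h; simp [yv]
  · simp [yv, Function.update_apply, h]

lemma hasDerivAt_g_line {g : (Fin 2 → ℝ) → ℝ} (hg : ContDiff ℝ (⊤ : ℕ∞) g)
    (xs : Fin 2 → ℝ) (t : ℝ) (x : Fin 2 → ℝ) (j : Fin 2) (s : ℝ) :
    HasDerivAt (fun s => g (yv xs t (Function.update x j s)))
      ((1 - t)⁻¹ * pd g j (yv xs t (Function.update x j s))) s := by
  have hinner : HasDerivAt (fun s : ℝ => (1 - t)⁻¹ * s - xs j) ((1 - t)⁻¹) s := by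
    simpa using ((hasDerivAt_id s).const_mul ((1 - t)⁻¹)).sub_const (xs j)
  have houter := hasDerivAt_comp_update hg (yv xs t x) j ((1 - t)⁻¹ * s - xs j)
  have := houter.comp s hinner
  simp only [Function.comp_def] at this
  have heq : (fun s => g (yv xs t (Function.update x j s)))
      = fun s => g (Function.update (yv xs t x) j ((1 - t)⁻¹ * s - xs j)) := by
    funext s; rw [yv_update]
  rw [heq, yv_update, mul_comm]
  exact this

lemma sum_sq_update_s9 (Y : Fin 2 → ℝ) (j : Fin 2) (a : ℝ) :
    ∑ k, (Function.update Y j a k) ^ 2 = (∑ k, (Y k) ^ 2) - (Y j) ^ 2 + a ^ 2 := by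
  have : (fun k => (Function.update Y j a k) ^ 2)
      = Function.update (fun k => (Y k) ^ 2) j (a ^ 2) := by
    funext k; by_cases h : k = j
    · subst h; simp
    · simp [Function.update_apply, h]
  rw [this, Finset.sum_update_of_mem (Finset.mem_univ j),
    Finset.sdiff_singleton_eq_erase, Finset.sum_erase_eq_sub (Finset.mem_univ j)]
  ring

lemma sum_lin_update (xs x : Fin 2 → ℝ) (j : Fin 2) (s : ℝ) :
    ∑ k, xs k * (Function.update x j s k - xs k)
      = (∑ k, xs k * (x k - xs k)) - xs j * (x j - xs j) + xs j * (s - xs j) := by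
  have : (fun k => xs k * (Function.update x j s k - xs k))
      = Function.update (fun k => xs k * (x k - xs k)) j (xs j * (s - xs j)) := by
    funext k; by_cases h : k = j
    · subst h; simp
    · simp [Function.update_apply, h]
  rw [this, Finset.sum_update_of_mem (Finset.mem_univ j),
    Finset.sdiff_singleton_eq_erase, Finset.sum_erase_eq_sub (Finset.mem_univ j)]
  ring

lemma thF_update (xs : Fin 2 → ℝ) (t : ℝ) (x : Fin 2 → ℝ) (j : Fin 2) (s : ℝ) :
    thF xs t (Function.update x j s)
      = thF xs t x + (1 - t) * (yv xs t x j) ^ 2 / 4 + xs j * (x j - xs j) / 2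
        - (1 - t) * ((1 - t)⁻¹ * s - xs j) ^ 2 / 4 - xs j * (s - xs j) / 2 := by
  unfold thF
  rw [yv_update, sum_sq_update_s9, sum_lin_update]
  ring

lemma hasDerivAt_thF_line (xs : Fin 2 → ℝ) {t : ℝ} (ht : (1:ℝ) - t ≠ 0)
    (x : Fin 2 → ℝ) (j : Fin 2) (s : ℝ) :
    HasDerivAt (fun s => thF xs t (Function.update x j s))
      (-(((1 - t)⁻¹ * s - xs j) + xs j) / 2) s := by
  have heq : (fun s => thF xs t (Function.update x j s))
      = fun s => thF xs t x + (1 - t) * (yv xs t x j) ^ 2 / 4 + xs j * (x j - xs j) / 2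
        - (1 - t) * ((1 - t)⁻¹ * s - xs j) ^ 2 / 4 - xs j * (s - xs j) / 2 := by
    funext s; exact thF_update xs t x j s
  rw [heq]
  have h1 : HasDerivAt (fun s : ℝ => (1 - t)⁻¹ * s - xs j) ((1 - t)⁻¹) s := by
    simpa using ((hasDerivAt_id s).const_mul ((1 - t)⁻¹)).sub_const (xs j)
  have h2 := (((h1.pow 2).const_mul (1 - t)).div_const 4)
  have h3 : HasDerivAt (fun s : ℝ => xs j * (s - xs j) / 2) (xs j / 2) s := by
    simpa using (((hasDerivAt_id s).sub_const (xs j)).const_mul (xs j)).div_const 2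
  have h4 := ((hasDerivAt_const s (thF xs t x + (1 - t) * (yv xs t x j) ^ 2 / 4
      + xs j * (x j - xs j) / 2)).sub h2).sub h3
  refine h4.congr_deriv ?_
  have hu : (1 - t) * (1 - t)⁻¹ = 1 := mul_inv_cancel₀ ht
  simp only [Nat.cast_ofNat, show (2:ℕ) - 1 = 1 from rfl, pow_one]
  linear_combination (-((1 - t)⁻¹ * s - xs j) / 2) * hu

noncomputable def PsiF (R : (Fin 2 → ℝ) → ℝ) (xs : Fin 2 → ℝ) (t : ℝ) (x : Fin 2 → ℝ) : ℂ :=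
  (((1 - t)⁻¹ : ℝ) : ℂ) * ((R (yv xs t x) : ℝ) : ℂ)
    * Complex.exp (Complex.I * ((thF xs t x : ℝ) : ℂ))

noncomputable def dPsiLine (R : (Fin 2 → ℝ) → ℝ) (xs : Fin 2 → ℝ) (t : ℝ)
    (x : Fin 2 → ℝ) (j : Fin 2) (s : ℝ) : ℂ :=
  (((1 - t)⁻¹ : ℝ) : ℂ) *
    ( (((1 - t)⁻¹ * pd R j (yv xs t (Function.update x j s)) : ℝ) : ℂ)
      + Complex.I * ((-(((1 - t)⁻¹ * s - xs j) + xs j) / 2 : ℝ) : ℂ)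
        * ((R (yv xs t (Function.update x j s)) : ℝ) : ℂ) )
    * Complex.exp (Complex.I * ((thF xs t (Function.update x j s) : ℝ) : ℂ))

lemma hasDerivAt_PsiF_line {R : (Fin 2 → ℝ) → ℝ} (hR : ContDiff ℝ (⊤ : ℕ∞) R)
    (xs : Fin 2 → ℝ) {t : ℝ} (ht : (1:ℝ) - t ≠ 0) (x : Fin 2 → ℝ) (j : Fin 2) (s : ℝ) :
    HasDerivAt (fun s => PsiF R xs t (Function.update x j s)) (dPsiLine R xs t x j s) s := by
  have hRl := (hasDerivAt_g_line hR xs t x j s).ofReal_comp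
  have hth := (hasDerivAt_thF_line xs ht x j s).ofReal_comp
  have hexp := (hth.const_mul Complex.I).cexp
  have h := ((hRl.const_mul (((1 - t)⁻¹ : ℝ) : ℂ)).mul hexp)
  have heq : (fun s => PsiF R xs t (Function.update x j s))
      = fun s => (((1 - t)⁻¹ : ℝ) : ℂ) * ((R (yv xs t (Function.update x j s)) : ℝ) : ℂ)
        * Complex.exp (Complex.I * ((thF xs t (Function.update x j s) : ℝ) : ℂ)) := rfl
  rw [heq]
  refine h.congr_deriv ?_
  unfold dPsiLine
  push_cast
  ring

noncomputable def d2PsiLine (R : (Fin 2 → ℝ) → ℝ) (xs : Fin 2 → ℝ) (t : ℝ)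
    (x : Fin 2 → ℝ) (j : Fin 2) : ℂ :=
  (((1 - t)⁻¹ : ℝ) : ℂ) * Complex.exp (Complex.I * ((thF xs t x : ℝ) : ℂ)) *
    ( ((((1 - t)⁻¹) ^ 2 * pd (pd R j) j (yv xs t x) : ℝ) : ℂ)
      + 2 * Complex.I * ((-((1 - t)⁻¹ * x j) / 2 : ℝ) : ℂ)
          * (((1 - t)⁻¹ * pd R j (yv xs t x) : ℝ) : ℂ)
      - Complex.I * (((1 - t)⁻¹ / 2 : ℝ) : ℂ) * ((R (yv xs t x) : ℝ) : ℂ)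
      - (((-((1 - t)⁻¹ * x j) / 2) ^ 2 * R (yv xs t x) : ℝ) : ℂ) )

lemma hasDerivAt_dPsiLine {R : (Fin 2 → ℝ) → ℝ} (hR : ContDiff ℝ (⊤ : ℕ∞) R)
    (xs : Fin 2 → ℝ) {t : ℝ} (ht : (1:ℝ) - t ≠ 0) (x : Fin 2 → ℝ) (j : Fin 2) :
    HasDerivAt (fun s => dPsiLine R xs t x j s) (d2PsiLine R xs t x j) (x j) := by
  have hB1 := (((hasDerivAt_g_line (contDiff_pd hR j) xs t x j (x j)).const_mul
      ((1 - t)⁻¹)).ofReal_comp)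
  have hφ : HasDerivAt (fun s : ℝ => -(((1 - t)⁻¹ * s - xs j) + xs j) / 2)
      (-(1 - t)⁻¹ / 2) (x j) := by
    have := ((((hasDerivAt_id (x j)).const_mul ((1 - t)⁻¹)).sub_const (xs j)).add_const
      (xs j)).neg.div_const 2
    refine this.congr_deriv ?_
    ring
  have hA := (hasDerivAt_g_line hR xs t x j (x j)).ofReal_comp
  have hth := (hasDerivAt_thF_line xs ht x j (x j)).ofReal_comp
  have hexp := (hth.const_mul Complex.I).cexp
  have hmid := hB1.add (((hφ.ofReal_comp).const_mul Complex.I).mul hA)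
  have h := (hmid.const_mul (((1 - t)⁻¹ : ℝ) : ℂ)).mul hexp
  have heq : (fun s => dPsiLine R xs t x j s)
      = fun s => ((((1 - t)⁻¹ : ℝ) : ℂ) *
          ( (((1 - t)⁻¹ * pd R j (yv xs t (Function.update x j s)) : ℝ) : ℂ)
            + Complex.I * ((-(((1 - t)⁻¹ * s - xs j) + xs j) / 2 : ℝ) : ℂ)
              * ((R (yv xs t (Function.update x j s)) : ℝ) : ℂ) ))
          * Complex.exp (Complex.I * ((thF xs t (Function.update x j s) : ℝ) : ℂ)) := rfl
  rw [heq]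
  refine h.congr_deriv ?_
  unfold d2PsiLine
  simp only [Pi.add_apply, Pi.mul_apply]
  rw [Function.update_eq_self]
  push_cast
  ring_nf
  rw [Complex.I_sq]
  ring_nf

lemma lapC_PsiF {R : (Fin 2 → ℝ) → ℝ} (hR : ContDiff ℝ (⊤ : ℕ∞) R)
    (xs : Fin 2 → ℝ) {t : ℝ} (ht : (1:ℝ) - t ≠ 0) (x : Fin 2 → ℝ) :
    lapC (PsiF R xs) t x = ∑ j, d2PsiLine R xs t x j := by
  unfold lapC
  apply Finset.sum_congr rfl
  intro j _
  rw [iteratedDeriv_two]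
  have hd : (deriv fun s => PsiF R xs t (Function.update x j s))
      = fun s => dPsiLine R xs t x j s := by
    funext s
    exact (hasDerivAt_PsiF_line hR xs ht x j s).deriv
  rw [hd]
  exact (hasDerivAt_dPsiLine hR xs ht x j).deriv

lemma hasDerivAt_inv1 {t : ℝ} (ht : (1:ℝ) - t ≠ 0) :
    HasDerivAt (fun t : ℝ => (1 - t)⁻¹) (((1 - t) ^ 2)⁻¹) t := by
  have := ((hasDerivAt_const t (1:ℝ)).sub (hasDerivAt_id t)).inv ht
  refine this.congr_deriv ?_
  simp only [Pi.sub_apply, id_eq, zero_sub, neg_neg, one_div]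

lemma hasDerivAt_yv_t (xs x : Fin 2 → ℝ) {t : ℝ} (ht : (1:ℝ) - t ≠ 0) :
    HasDerivAt (fun t => yv xs t x) (((1 - t) ^ 2)⁻¹ • x) t := by
  rw [hasDerivAt_pi]
  intro k
  have h := ((hasDerivAt_inv1 ht).mul_const (x k)).sub_const (xs k)
  have heq : (fun t => yv xs t x k) = fun t : ℝ => (1 - t)⁻¹ * x k - xs k := by
    funext t; simp [yv]
  rw [heq]
  simpa using h

lemma hasDerivAt_g_t {g : (Fin 2 → ℝ) → ℝ} (hg : ContDiff ℝ (⊤ : ℕ∞) g)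
    (xs x : Fin 2 → ℝ) {t : ℝ} (ht : (1:ℝ) - t ≠ 0) :
    HasDerivAt (fun t => g (yv xs t x))
      (((1 - t) ^ 2)⁻¹ * (x 0 * pd g 0 (yv xs t x) + x 1 * pd g 1 (yv xs t x))) t := by
  have h1 := ((hg.differentiable (by simp) (yv xs t x)).hasFDerivAt).comp_hasDerivAt t
    (hasDerivAt_yv_t xs x ht)
  refine h1.congr_deriv ?_
  rw [_root_.map_smul, clm_decomp]
  simp only [pd, smul_eq_mul]

noncomputable def thDt (xs : Fin 2 → ℝ) (t : ℝ) (x : Fin 2 → ℝ) : ℝ :=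
  ((1 - t) ^ 2)⁻¹ - (∑ k, (yv xs t x k) ^ 2) / 4 - (∑ k, yv xs t x k * xs k) / 2
    - (∑ k, (xs k) ^ 2) / 4

lemma hasDerivAt_thF_t (xs x : Fin 2 → ℝ) {t : ℝ} (ht : (1:ℝ) - t ≠ 0) :
    HasDerivAt (fun t => thF xs t x) (thDt xs t x) t := by
  have hy : ∀ k, HasDerivAt (fun t => yv xs t x k) ((((1 - t) ^ 2)⁻¹ • x) k) t :=
    fun k => hasDerivAt_pi.mp (hasDerivAt_yv_t xs x ht) k
  have hS : HasDerivAt (fun t => ∑ k : Fin 2, (yv xs t x k) ^ 2)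
      (∑ k : Fin 2, 2 * yv xs t x k ^ 1 * ((((1 - t) ^ 2)⁻¹ • x) k)) t :=
    by simpa using (HasDerivAt.fun_sum (u := Finset.univ) fun k _ => (hy k).pow 2)
  have ha := (hasDerivAt_id t).div ((hasDerivAt_const t (1:ℝ)).sub (hasDerivAt_id t)) ht
  have hb := (((hasDerivAt_const t (1:ℝ)).sub (hasDerivAt_id t)).mul hS).div_const 4
  have hc := hasDerivAt_const t ((∑ k, xs k * (x k - xs k)) / 2)
  have hd := ((hasDerivAt_id t).const_mul (∑ k : Fin 2, (xs k) ^ 2)).div_const 4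
  have h := ((ha.sub hb).sub hc).sub hd
  have heq : (fun t => thF xs t x) = fun t =>
      t / (1 - t) - (1 - t) * (∑ j, (yv xs t x j) ^ 2) / 4
        - (∑ j, xs j * (x j - xs j)) / 2 - (∑ j, (xs j) ^ 2) * t / 4 := rfl
  rw [heq]
  refine h.congr_deriv ?_
  unfold thDt
  simp only [yv, Fin.sum_univ_two, Pi.sub_apply, Pi.smul_apply, smul_eq_mul, pow_one,
    Pi.div_apply, Pi.mul_apply, id_eq]
  field_simp
  ring

noncomputable def dPsiT (R : (Fin 2 → ℝ) → ℝ) (xs : Fin 2 → ℝ) (t : ℝ) (x : Fin 2 → ℝ) : ℂ :=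
  ( ((((1 - t) ^ 2)⁻¹ * R (yv xs t x) : ℝ) : ℂ)
    + (((1 - t)⁻¹ * (((1 - t) ^ 2)⁻¹
        * (x 0 * pd R 0 (yv xs t x) + x 1 * pd R 1 (yv xs t x))) : ℝ) : ℂ)
    + (((1 - t)⁻¹ * R (yv xs t x) : ℝ) : ℂ) * Complex.I * ((thDt xs t x : ℝ) : ℂ) )
  * Complex.exp (Complex.I * ((thF xs t x : ℝ) : ℂ))

lemma hasDerivAt_PsiF_t {R : (Fin 2 → ℝ) → ℝ} (hR : ContDiff ℝ (⊤ : ℕ∞) R)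
    (xs x : Fin 2 → ℝ) {t : ℝ} (ht : (1:ℝ) - t ≠ 0) :
    HasDerivAt (fun t => PsiF R xs t x) (dPsiT R xs t x) t := by
  have hf1 := (hasDerivAt_inv1 ht).ofReal_comp
  have hf2 := (hasDerivAt_g_t hR xs x ht).ofReal_comp
  have hf3 := (((hasDerivAt_thF_t xs x ht).ofReal_comp).const_mul Complex.I).cexp
  have h := (hf1.mul hf2).mul hf3
  have heq : (fun t => PsiF R xs t x) = fun t =>
      (((1 - t)⁻¹ : ℝ) : ℂ) * ((R (yv xs t x) : ℝ) : ℂ)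
        * Complex.exp (Complex.I * ((thF xs t x : ℝ) : ℂ)) := rfl
  rw [heq]
  refine h.congr_deriv ?_
  unfold dPsiT
  simp only [Pi.mul_apply]
  push_cast
  ring


lemma lapR_eq_pd {g : (Fin 2 → ℝ) → ℝ} (hg : ContDiff ℝ (⊤ : ℕ∞) g) (ξ : Fin 2 → ℝ) :
    lapR g ξ = ∑ j, pd (pd g j) j ξ := by
  apply Finset.sum_congr rfl
  intro j _
  rw [iteratedDeriv_two]
  have hd : (deriv fun s => g (Function.update ξ j s))
      = fun s => pd g j (Function.update ξ j s) := by
    funext s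
    exact (hasDerivAt_comp_update hg ξ j s).deriv
  rw [hd]
  have := (hasDerivAt_comp_update (contDiff_pd hg j) ξ j (ξ j)).deriv
  rw [this, Function.update_eq_self]

lemma PsiF_norm (R : (Fin 2 → ℝ) → ℝ) (xs : Fin 2 → ℝ) {t : ℝ} (ht : 0 < 1 - t)
    (x : Fin 2 → ℝ) : ‖PsiF R xs t x‖ = (1 - t)⁻¹ * |R (yv xs t x)| := by
  unfold PsiF
  rw [norm_mul, norm_mul]
  have h3 : ‖Complex.exp (Complex.I * ((thF xs t x : ℝ) : ℂ))‖ = 1 := by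
    rw [Complex.norm_exp]
    simp
  rw [h3, Complex.norm_real, Complex.norm_real]
  rw [Real.norm_eq_abs, Real.norm_eq_abs, abs_of_pos (inv_pos.mpr ht), mul_one]

set_option maxHeartbeats 2000000 in
lemma pde_PsiF {R : (Fin 2 → ℝ) → ℝ} (hRsmooth : ContDiff ℝ (⊤ : ℕ∞) R)
    (hReq : ∀ ξ : Fin 2 → ℝ, lapR R ξ - R ξ + (R ξ) ^ 3 = 0)
    (xs x : Fin 2 → ℝ) {t : ℝ} (ht1 : t < 1) :
    Complex.I * tDeriv (PsiF R xs) t x + lapC (PsiF R xs) t x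
      + (‖PsiF R xs t x‖ : ℂ) ^ 2 * PsiF R xs t x = 0 := by
  have htpos : 0 < 1 - t := by linarith
  have ht : (1:ℝ) - t ≠ 0 := ne_of_gt htpos
  have htd : tDeriv (PsiF R xs) t x = dPsiT R xs t x :=
    (hasDerivAt_PsiF_t hRsmooth xs x ht).deriv
  have hcc : pd (pd R 1) 1 (yv xs t x)
      = R (yv xs t x) - (R (yv xs t x)) ^ 3 - pd (pd R 0) 0 (yv xs t x) := by
    have h := hReq (yv xs t x)
    rw [lapR_eq_pd hRsmooth] at h
    simp only [Fin.sum_univ_two] at h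
    linarith
  have hccC : ((pd (pd R 1) 1 (yv xs t x) : ℝ) : ℂ)
      = ((R (yv xs t x) : ℝ) : ℂ) - ((R (yv xs t x) : ℝ) : ℂ) ^ 3
        - ((pd (pd R 0) 0 (yv xs t x) : ℝ) : ℂ) := by
    exact_mod_cast congrArg (fun r : ℝ => (r : ℂ)) hcc
  rw [htd, lapC_PsiF hRsmooth xs ht x, PsiF_norm R xs htpos x]
  unfold dPsiT d2PsiLine thDt PsiF
  simp only [Fin.sum_univ_two]
  have habs : ((|R (yv xs t x)| : ℝ) : ℂ) ^ 2 = ((R (yv xs t x) : ℝ) : ℂ) ^ 2 := by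
    exact_mod_cast congrArg (fun r : ℝ => (r : ℂ)) (sq_abs (R (yv xs t x)))
  push_cast
  rw [hccC]
  have hεC : ((1 : ℂ) - (t : ℂ)) ≠ 0 := by
    intro h
    apply ht
    have := congrArg Complex.re h
    simpa using this
  have hyv : ∀ k, (yv xs t x k : ℝ) = (1 - t)⁻¹ * x k - xs k := by
    intro k; simp [yv]
  rw [hyv 0, hyv 1]
  push_cast
  rw [mul_pow, habs]
  simp only [← inv_pow]
  generalize (1 - (t:ℂ))⁻¹ = u
  ring_nf
  rw [Complex.I_sq]
  ring_nf

lemma contDiff_yv (xs : Fin 2 → ℝ) (t : ℝ) : ContDiff ℝ (⊤ : ℕ∞) (fun x => yv xs t x) := by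
  unfold yv; fun_prop

lemma contDiff_thF (xs : Fin 2 → ℝ) (t : ℝ) : ContDiff ℝ (⊤ : ℕ∞) (fun x => thF xs t x) := by
  unfold thF
  have hy : ∀ j : Fin 2, ContDiff ℝ (⊤ : ℕ∞) (fun x => yv xs t x j) :=
    fun j => (contDiff_pi.mp (contDiff_yv xs t)) j
  have h1 : ContDiff ℝ (⊤ : ℕ∞) (fun x : Fin 2 → ℝ => ∑ j : Fin 2, (yv xs t x j) ^ 2) :=
    ContDiff.sum fun j _ => (hy j).pow 2
  have h2 : ContDiff ℝ (⊤ : ℕ∞) (fun x : Fin 2 → ℝ => ∑ j : Fin 2, xs j * (x j - xs j)) :=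
    ContDiff.sum fun j _ => contDiff_const.mul ((contDiff_apply ℝ ℝ j).sub contDiff_const)
  exact ((contDiff_const.sub (((contDiff_const.mul h1).div_const 4))).sub
    (h2.div_const 2)).sub contDiff_const

lemma contDiff_PsiF_x {R : (Fin 2 → ℝ) → ℝ} (hR : ContDiff ℝ (⊤ : ℕ∞) R)
    (xs : Fin 2 → ℝ) (t : ℝ) : ContDiff ℝ (⊤ : ℕ∞) (fun x => PsiF R xs t x) := by
  unfold PsiF
  apply ContDiff.mul
  · exact contDiff_const.mul
      (Complex.ofRealCLM.contDiff.comp (hR.comp (contDiff_yv xs t)))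
  · exact Complex.contDiff_exp.comp
      (contDiff_const.mul (Complex.ofRealCLM.contDiff.comp (contDiff_thF xs t)))

noncomputable def eN (v : Fin 2 → ℝ) : ℝ := Real.sqrt (∑ j, (v j) ^ 2)

lemma eN_eq (v : Fin 2 → ℝ) : eN v = ‖(WithLp.equiv 2 (Fin 2 → ℝ)).symm v‖ := by
  rw [EuclideanSpace.norm_eq]
  simp [eN, Real.norm_eq_abs, sq_abs]

lemma eN_pos {x : Fin 2 → ℝ} (hx : x ≠ 0) : 0 < eN x := by
  rw [eN_eq]
  rw [norm_pos_iff]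
  intro h
  exact hx ((WithLp.equiv 2 (Fin 2 → ℝ)).symm.injective (h.trans rfl))

lemma eN_lower (xs x : Fin 2 → ℝ) {t : ℝ} (ht : 0 < 1 - t) :
    (1 - t)⁻¹ * eN x - eN xs ≤ eN (yv xs t x) := by
  rw [eN_eq, eN_eq, eN_eq]
  have h : (WithLp.equiv 2 (Fin 2 → ℝ)).symm (yv xs t x)
      = (1 - t)⁻¹ • (WithLp.equiv 2 (Fin 2 → ℝ)).symm x
        - (WithLp.equiv 2 (Fin 2 → ℝ)).symm xs := rfl
  rw [h]
  have h2 := norm_sub_norm_le ((1 - t)⁻¹ • (WithLp.equiv 2 (Fin 2 → ℝ)).symm x)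
    ((WithLp.equiv 2 (Fin 2 → ℝ)).symm xs)
  rw [norm_smul, Real.norm_eq_abs, abs_of_pos (inv_pos.mpr ht)] at h2
  linarith

lemma tendsto_PsiF_zero {R : (Fin 2 → ℝ) → ℝ} {C δ : ℝ} (hC : 0 < C) (hδ : 0 < δ)
    (hdecay : ∀ ξ : Fin 2 → ℝ,
      |R ξ| ≤ C * Real.exp (-δ * Real.sqrt (∑ j : Fin 2, (ξ j) ^ 2)))
    (xs : Fin 2 → ℝ) {x : Fin 2 → ℝ} (hx : x ≠ 0) :
    Filter.Tendsto (fun t => PsiF R xs t x) (nhdsWithin 1 (Set.Iio 1)) (nhds 0) := by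
  have ha : 0 < eN x := eN_pos hx
  apply squeeze_zero_norm'
    (a := fun t => (C * Real.exp (δ * eN xs)) * ((1 - t)⁻¹ * Real.exp (-(δ * eN x * (1 - t)⁻¹))))
  · filter_upwards [self_mem_nhdsWithin] with t ht
    have htpos : 0 < 1 - t := sub_pos.mpr (Set.mem_Iio.mp ht)
    rw [PsiF_norm R xs htpos x]
    have h1 : |R (yv xs t x)| ≤ C * Real.exp (-δ * eN (yv xs t x)) := hdecay (yv xs t x)
    have hlow := eN_lower xs x htpos
    have h2 : -δ * eN (yv xs t x) ≤ -(δ * eN x * (1 - t)⁻¹) + δ * eN xs := by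
      nlinarith [mul_le_mul_of_nonneg_left hlow hδ.le]
    calc (1 - t)⁻¹ * |R (yv xs t x)|
        ≤ (1 - t)⁻¹ * (C * Real.exp (-δ * eN (yv xs t x))) :=
          mul_le_mul_of_nonneg_left h1 (inv_pos.mpr htpos).le
      _ ≤ (1 - t)⁻¹ * (C * Real.exp (-(δ * eN x * (1 - t)⁻¹) + δ * eN xs)) :=
          mul_le_mul_of_nonneg_left
            (mul_le_mul_of_nonneg_left (Real.exp_le_exp.mpr h2) hC.le)
            (inv_pos.mpr htpos).le
      _ = C * Real.exp (δ * eN xs) * ((1 - t)⁻¹ * Real.exp (-(δ * eN x * (1 - t)⁻¹))) := by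
          rw [Real.exp_add]; ring
  · have h0 : Filter.Tendsto (fun t : ℝ => (1 - t)⁻¹) (nhdsWithin 1 (Set.Iio 1)) Filter.atTop := by
      apply tendsto_inv_nhdsGT_zero.comp
      apply tendsto_nhdsWithin_of_tendsto_nhds_of_eventually_within
      · have h : Filter.Tendsto (fun t : ℝ => 1 - t) (nhds 1) (nhds 0) := by
          have hc : Continuous (fun t : ℝ => 1 - t) := continuous_const.sub continuous_id
          have := hc.tendsto (1:ℝ)
          simpa using this
        exact h.mono_left nhdsWithin_le_nhds
      · filter_upwards [self_mem_nhdsWithin] with t ht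
        exact Set.mem_Ioi.mpr (sub_pos.mpr (Set.mem_Iio.mp ht))
    have h2 := Real.tendsto_pow_mul_exp_neg_atTop_nhds_zero 1
    have h3 : Filter.Tendsto (fun r : ℝ => (δ * eN x) * r) Filter.atTop Filter.atTop :=
      Filter.Tendsto.const_mul_atTop (by positivity) Filter.tendsto_id
    have h4 := (h2.comp h3).const_mul ((δ * eN x)⁻¹)
    have h1 : Filter.Tendsto (fun r : ℝ => r * Real.exp (-(δ * eN x * r)))
        Filter.atTop (nhds ((δ * eN x)⁻¹ * 0)) := by
      apply h4.congr
      intro r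
      simp only [Function.comp_apply, pow_one]
      have hne : δ * eN x ≠ 0 := by positivity
      field_simp
    have h5 := (h1.comp h0).const_mul (C * Real.exp (δ * eN xs))
    simpa [Function.comp_def] using h5

lemma mass_change_of_var {R : (Fin 2 → ℝ) → ℝ} (f : (Fin 2 → ℝ) → ℝ)
    (xs : Fin 2 → ℝ) {t : ℝ} (ht : t < 1) :
    ∫ x : Fin 2 → ℝ, ‖PsiF R xs t x‖ ^ 2 * f x
      = ∫ v : Fin 2 → ℝ, (R v) ^ 2 * f ((1 - t) • (v + xs)) := by
  have htpos : 0 < 1 - t := sub_pos.mpr ht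
  have hne : (1 : ℝ) - t ≠ 0 := ne_of_gt htpos
  have h1 : ∀ x : Fin 2 → ℝ, ‖PsiF R xs t x‖ ^ 2 * f x
      = ((1 - t)⁻¹) ^ 2 * ((fun z => (R ((1 - t)⁻¹ • z - xs)) ^ 2 * f z) x) := by
    intro x
    rw [PsiF_norm R xs htpos x, mul_pow, sq_abs]
    simp only [yv]
    ring
  simp only [h1]
  rw [MeasureTheory.integral_const_mul]
  have h2 := MeasureTheory.Measure.integral_comp_smul (μ := MeasureTheory.volume)
    (fun z : Fin 2 → ℝ => (R ((1 - t)⁻¹ • z - xs)) ^ 2 * f z) (1 - t)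
  rw [Module.finrank_fin_fun, abs_of_pos (inv_pos.mpr (by positivity)), smul_eq_mul] at h2
  have h3 : (fun w : Fin 2 → ℝ => (R ((1 - t)⁻¹ • ((1 - t) • w) - xs)) ^ 2 * f ((1 - t) • w))
      = fun w : Fin 2 → ℝ => (R (w - xs)) ^ 2 * f ((1 - t) • w) := by
    funext w
    rw [smul_smul, inv_mul_cancel₀ hne, one_smul]
  rw [h3] at h2
  -- h2 : ∫ w, (R (w - xs))^2 * f ((1-t)•w) = ((1-t)^2)⁻¹ * ∫ z, (R ((1-t)⁻¹ • z - xs))^2 * f z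
  have h4 := MeasureTheory.integral_add_right_eq_self
    (μ := MeasureTheory.volume) (fun w : Fin 2 → ℝ => (R (w - xs)) ^ 2 * f ((1 - t) • w)) xs
  have h5 : (fun v : Fin 2 → ℝ => (R ((v + xs) - xs)) ^ 2 * f ((1 - t) • (v + xs)))
      = fun v : Fin 2 → ℝ => (R v) ^ 2 * f ((1 - t) • (v + xs)) := by
    funext v
    rw [add_sub_cancel_right]
  rw [h5] at h4
  -- combine
  rw [h4, h2]
  field_simp

lemma mass_tendsto {R : (Fin 2 → ℝ) → ℝ} (hRc : Continuous R)
    (hL2 : MeasureTheory.Integrable (fun ξ : Fin 2 → ℝ => (R ξ) ^ 2))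
    (xs : Fin 2 → ℝ) (f : (Fin 2 → ℝ) → ℝ) (hf : Continuous f)
    (K : ℝ) (hK : ∀ x, |f x| ≤ K) :
    Filter.Tendsto (fun t => ∫ x : Fin 2 → ℝ, ‖PsiF R xs t x‖ ^ 2 * f x)
      (nhdsWithin 1 (Set.Iio 1))
      (nhds ((∫ ξ : Fin 2 → ℝ, (R ξ) ^ 2) * f 0)) := by
  have key : Filter.Tendsto
      (fun t : ℝ => ∫ v : Fin 2 → ℝ, (R v) ^ 2 * f ((1 - t) • (v + xs)))
      (nhdsWithin 1 (Set.Iio 1))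
      (nhds (∫ v : Fin 2 → ℝ, (R v) ^ 2 * f 0)) := by
    apply MeasureTheory.tendsto_integral_filter_of_dominated_convergence
      (F := fun (t : ℝ) (v : Fin 2 → ℝ) => (R v) ^ 2 * f ((1 - t) • (v + xs)))
      (f := fun v : Fin 2 → ℝ => (R v) ^ 2 * f 0)
      (bound := fun v => (R v) ^ 2 * K)
    · filter_upwards with t
      apply Continuous.aestronglyMeasurable
      exact (hRc.pow 2).mul (hf.comp (by fun_prop))
    · filter_upwards with t
      filter_upwards with v
      rw [norm_mul, Real.norm_eq_abs, Real.norm_eq_abs, abs_pow, sq_abs]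
      exact mul_le_mul_of_nonneg_left (hK _) (sq_nonneg _)
    · exact hL2.mul_const K
    · filter_upwards with v
      have hcont : Filter.Tendsto (fun t : ℝ => (1 - t) • (v + xs))
          (nhdsWithin 1 (Set.Iio 1)) (nhds 0) := by
        have hc : Continuous (fun t : ℝ => (1 - t) • (v + xs)) :=
          (continuous_const.sub continuous_id).smul continuous_const
        have h := (hc.tendsto 1).mono_left
          (nhdsWithin_le_nhds (s := Set.Iio (1:ℝ)))
        simpa using h
      have := ((hf.tendsto 0).comp hcont).const_mul ((R v) ^ 2)
      simpa [Function.comp_def] using this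
  rw [MeasureTheory.integral_mul_const] at key
  refine Filter.Tendsto.congr' ?_ key
  filter_upwards [self_mem_nhdsWithin] with t ht
  exact (mass_change_of_var f xs (Set.mem_Iio.mp ht)).symm

lemma yv_zero (xs x : Fin 2 → ℝ) : yv xs 0 x = x - xs := by
  funext k
  simp [yv]

/-- Loss of reversibility at collapse: given the ground state `R` of `ΔR − R + R³ = 0`
(smooth, exponentially decaying, square-integrable, with a strict maximum of its
modulus at the origin), there is a family `Ψ x*` of solutions of the 2D cubic NLS on
`(0,1) × ℝ²`, whose initial data are smooth, distinct for distinct `x*`, with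
`|Ψ x* (0,x)| = |R(x − x*)|` attaining its strict maximum at `x*`, and which all
collapse at `t = 1` at `x = 0` with zero radiation field: `Ψ x* (t,x) → 0` for
`x ≠ 0`, while `|Ψ x* (t,·)|² ⇀ ‖R‖_{L²}² δ₀`. Hence the limit at collapse does not
determine the initial datum. -/
theorem loss_of_reversibility_at_collapse (R : (Fin 2 → ℝ) → ℝ)
    (hRsmooth : ContDiff ℝ (⊤ : ℕ∞) R)
    (hReq : ∀ ξ : Fin 2 → ℝ, lapR R ξ - R ξ + (R ξ) ^ 3 = 0)
    (C δ : ℝ) (hC : 0 < C) (hδ : 0 < δ)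
    (hdecay : ∀ ξ : Fin 2 → ℝ,
      |R ξ| ≤ C * Real.exp (-δ * Real.sqrt (∑ j : Fin 2, (ξ j) ^ 2)))
    (hL2 : Integrable (fun ξ : Fin 2 → ℝ => (R ξ) ^ 2))
    (hmax : ∀ ξ : Fin 2 → ℝ, ξ ≠ 0 → |R ξ| < R 0) (hR0 : 0 < R 0) :
    ∃ Ψ : (Fin 2 → ℝ) → ℝ → (Fin 2 → ℝ) → ℂ,
      (∀ xs : Fin 2 → ℝ,
        -- (i) classical solution of the 2D cubic NLS on (0,1) × ℝ²
        (∀ t ∈ Set.Ioo (0 : ℝ) 1, ∀ x : Fin 2 → ℝ,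
          Complex.I * tDeriv (Ψ xs) t x + lapC (Ψ xs) t x
            + (‖Ψ xs t x‖ : ℂ) ^ 2 * Ψ xs t x = 0) ∧
        -- (ii) smooth initial datum with |ψ(0,x)| = |R(x − x*)|,
        -- whose modulus attains its strict maximum at x*
        ContDiff ℝ (⊤ : ℕ∞) (fun x => Ψ xs 0 x) ∧
        (∀ x : Fin 2 → ℝ, ‖Ψ xs 0 x‖ = |R (x - xs)|) ∧
        (∀ x : Fin 2 → ℝ, x ≠ xs → ‖Ψ xs 0 x‖ < ‖Ψ xs 0 xs‖) ∧
        -- (iii) pointwise vanishing away from the collapse point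
        (∀ x : Fin 2 → ℝ, x ≠ 0 →
          Filter.Tendsto (fun t => Ψ xs t x) (nhdsWithin 1 (Set.Iio 1)) (nhds 0)) ∧
        -- (iv) weak-* concentration of the mass at the origin
        (∀ f : (Fin 2 → ℝ) → ℝ, Continuous f → (∃ K : ℝ, ∀ x, |f x| ≤ K) →
          Filter.Tendsto (fun t => ∫ x : Fin 2 → ℝ, ‖Ψ xs t x‖ ^ 2 * f x)
            (nhdsWithin 1 (Set.Iio 1))
            (nhds ((∫ ξ : Fin 2 → ℝ, (R ξ) ^ 2) * f 0)))) ∧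
      -- distinct x* give distinct initial data
      (∀ xs ys : Fin 2 → ℝ, xs ≠ ys → Ψ xs 0 ≠ Ψ ys 0) := by
  refine ⟨fun xs => PsiF R xs, fun xs => ⟨?_, ?_, ?_, ?_, ?_, ?_⟩, ?_⟩
  · -- (i) PDE
    intro t ht x
    exact pde_PsiF hRsmooth hReq xs x ht.2
  · -- (ii) smoothness
    exact contDiff_PsiF_x hRsmooth xs 0
  · -- norm of initial datum
    intro x
    rw [PsiF_norm R xs (by norm_num) x]
    rw [yv_zero]
    norm_num
  · -- strict maximum
    intro x hx
    rw [PsiF_norm R xs (by norm_num) x, PsiF_norm R xs (by norm_num) xs, yv_zero, yv_zero]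
    have h1 : |R (x - xs)| < R 0 := hmax _ (sub_ne_zero.mpr hx)
    have h2 : xs - xs = 0 := sub_self xs
    rw [h2, abs_of_pos hR0]
    norm_num
    linarith [h1]
  · -- (iii)
    intro x hx
    exact tendsto_PsiF_zero hC hδ hdecay xs hx
  · -- (iv)
    intro f hf hKex
    obtain ⟨K, hK⟩ := hKex
    exact mass_tendsto hRsmooth.continuous hL2 xs f hf K hK
  · -- distinctness
    intro xs ys hne h
    have h1 := congrFun h xs
    have h2 : ‖PsiF R xs 0 xs‖ = ‖PsiF R ys 0 xs‖ := congrArg norm h1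
    rw [PsiF_norm R xs (by norm_num) xs, PsiF_norm R ys (by norm_num) xs,
      yv_zero, yv_zero, sub_self, abs_of_pos hR0] at h2
    have h3 : |R (xs - ys)| < R 0 := hmax _ (sub_ne_zero.mpr hne)
    norm_num at h2
    linarith
end
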